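/- If B and C are two bases of the same lattice L and C is LLL-reduced, then max_i ‖c_i*‖ ≤ (4/3 + ε)^{(N−1)/4} · max_i ‖b_i*‖. -/

import Mathlib

/-!
Fix `k`, put `α = 4/3 + ε` and `M = max_j ‖b_j*‖`. Complete `c_0, …, c_{k-1}` to `N` vectors `u`
by adding, one at a time, the first `b_j` outside the current span; since `b_0, …, b_{j-1}` already
lie in that span, the new Gram–Schmidt vector is no longer than `b_j*`, so `‖u_t*‖ ≤ M` for
`t ≥ k`. The family `u` lies in the lattice of `c`, so its Gram determinant `∏ ‖u_t*‖²` is a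
nonzero square integer times `∏ ‖c_t*‖²`; as the first `k` factors agree,
`∏_{t ≥ k} ‖c_t*‖ ≤ M^(N-k)`. The LLL condition gives `‖c_k*‖ ≤ α^((t-k)/2) ‖c_t*‖` for `t ≥ k`,
and multiplying these `r = N - k` inequalities yields
`‖c_k*‖^r ≤ α^(r(r-1)/4) M^r ≤ α^(r(N-1)/4) M^r`.
-/

/-- Gram–Schmidt orthogonalization for families indexed by `Fin M`. -/
noncomputable def gramSchmidtFin {N M : ℕ} (b : Fin M → EuclideanSpace ℝ (Fin N)) :
    Fin M → EuclideanSpace ℝ (Fin N) :=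
  @InnerProductSpace.gramSchmidt ℝ _ _ _ _ (Fin M) _ _ ((Fin.Lt.isWellOrder M).toIsWellFounded) b

open Finset Submodule InnerProductSpace Matrix

section GramSchmidt

variable {𝕜 E ι κ : Type*} [RCLike 𝕜] [NormedAddCommGroup E] [InnerProductSpace 𝕜 E]
  [LinearOrder ι] [LocallyFiniteOrderBot ι] [WellFoundedLT ι]
  [LinearOrder κ] [LocallyFiniteOrderBot κ] [WellFoundedLT κ]

theorem sub_gramSchmidt_mem_span (f : ι → E) (n : ι) :
    f n - gramSchmidt 𝕜 f n ∈ span 𝕜 (f '' Set.Iio n) := by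
  rw [← span_gramSchmidt_Iio, gramSchmidt_def, sub_sub_cancel]
  refine sum_mem fun i hi => ?_
  rw [starProjection_singleton]
  exact smul_mem _ _ (subset_span ⟨i, mem_Iio.mp hi, rfl⟩)

theorem inner_gramSchmidt_eq_zero_of_mem_span {f : ι → E} {n : ι} {x : E}
    (hx : x ∈ span 𝕜 (f '' Set.Iio n)) : inner 𝕜 (gramSchmidt 𝕜 f n) x = 0 := by
  rw [← span_gramSchmidt_Iio] at hx
  induction hx using span_induction with
  | mem y hy =>
    obtain ⟨i, hi, rfl⟩ := hy
    exact gramSchmidt_orthogonal 𝕜 f (ne_of_gt hi)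
  | zero => exact inner_zero_right _
  | add y z _ _ hy hz => rw [inner_add_right, hy, hz, add_zero]
  | smul a y _ hy => rw [inner_smul_right, hy, mul_zero]

theorem norm_gramSchmidt_le_norm_sub {f : ι → E} {n : ι} {u : E}
    (hu : u ∈ span 𝕜 (f '' Set.Iio n)) : ‖gramSchmidt 𝕜 f n‖ ≤ ‖f n - u‖ := by
  have hrest : f n - gramSchmidt 𝕜 f n - u ∈ span 𝕜 (f '' Set.Iio n) :=
    sub_mem (sub_gramSchmidt_mem_span f n) hu
  have hpyth := norm_add_sq_eq_norm_sq_add_norm_sq_of_inner_eq_zero _ _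
    (inner_gramSchmidt_eq_zero_of_mem_span hrest)
  rw [show gramSchmidt 𝕜 f n + (f n - gramSchmidt 𝕜 f n - u) = f n - u by abel] at hpyth
  exact (mul_self_le_mul_self_iff (norm_nonneg _) (norm_nonneg _)).mpr
    (hpyth ▸ le_add_of_nonneg_right (mul_self_nonneg _))

theorem norm_gramSchmidt_le_of_span_Iio_le {f : ι → E} {g : κ → E} {n : ι} {m : κ}
    (hfg : f n = g m) (hspan : span 𝕜 (g '' Set.Iio m) ≤ span 𝕜 (f '' Set.Iio n)) :
    ‖gramSchmidt 𝕜 f n‖ ≤ ‖gramSchmidt 𝕜 g m‖ := by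
  simpa [hfg] using norm_gramSchmidt_le_norm_sub (hspan (sub_gramSchmidt_mem_span g m))

theorem gramSchmidt_ne_zero_of_notMem_span {f : ι → E} {n : ι}
    (h : f n ∉ span 𝕜 (f '' Set.Iio n)) : gramSchmidt 𝕜 f n ≠ 0 := by
  intro h0
  exact h (by simpa [h0] using sub_gramSchmidt_mem_span (𝕜 := 𝕜) f n)

theorem gramSchmidt_congr {f g : ι → E} {n : ι} (h : ∀ i ≤ n, f i = g i) :
    gramSchmidt 𝕜 f n = gramSchmidt 𝕜 g n := by
  induction n using WellFoundedLT.induction with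
  | ind n ih =>
    rw [gramSchmidt_def, gramSchmidt_def, h n le_rfl]
    refine congrArg _ (sum_congr rfl fun i hi => ?_)
    have hi := mem_Iio.mp hi
    rw [ih i hi fun j hj => h j (hj.trans hi.le)]

end GramSchmidt

section Gram

variable {E ι κ : Type*} [NormedAddCommGroup E] [InnerProductSpace ℝ E]

theorem gram_sum_smul [Fintype ι] (A : Matrix κ ι ℝ) (v : ι → E) :
    gram ℝ (fun i => ∑ a, A i a • v a) = A * gram ℝ v * Aᵀ := by
  ext i j
  simp only [gram_apply, sum_inner, inner_sum, real_inner_smul_left, real_inner_smul_right,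
    mul_apply, transpose_apply, Finset.sum_mul]
  refine sum_congr rfl fun a _ => sum_congr rfl fun b _ => ?_
  rw [real_inner_comm]
  ring

theorem det_gram_le_of_forall_mem_span_int [Fintype ι] [DecidableEq ι] {v w : ι → E}
    (hw : ∀ t, w t ∈ span ℤ (Set.range v)) (hdet : (gram ℝ w).det ≠ 0) :
    (gram ℝ v).det ≤ (gram ℝ w).det := by
  choose A hA using fun t => (mem_span_range_iff_exists_fun ℤ).mp (hw t)
  have hw' : w = fun t => ∑ a, (of A).map (Int.cast : ℤ → ℝ) t a • v a := by
    funext t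
    simp [← hA t, Int.cast_smul_eq_zsmul]
  have hgram : (gram ℝ w).det = ((of A).det : ℝ) ^ 2 * (gram ℝ v).det := by
    rw [hw', gram_sum_smul, det_mul, det_mul, det_transpose, Int.cast_det]
    ring
  have hA0 : (of A).det ≠ 0 := by
    rintro h
    simp [hgram, h] at hdet
  have hA1 : (1 : ℝ) ≤ ((of A).det : ℝ) ^ 2 :=
    (one_le_sq_iff_one_le_abs _).mpr (by exact_mod_cast Int.one_le_abs hA0)
  rw [hgram]
  exact le_mul_of_one_le_left (posSemidef_gram ℝ v).det_nonneg hA1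

variable [LinearOrder ι] [LocallyFiniteOrderBot ι] [WellFoundedLT ι]

theorem gram_gramSchmidt_eq_diagonal (f : ι → E) :
    gram ℝ (gramSchmidt ℝ f) = diagonal fun i => ‖gramSchmidt ℝ f i‖ ^ 2 := by
  ext i j
  rcases eq_or_ne i j with rfl | hij
  · simp [gram_apply]
  · simp [gram_apply, gramSchmidt_orthogonal ℝ f hij, hij]

theorem det_gram_eq_prod_norm_gramSchmidt_sq [Fintype ι] (f : ι → E) :
    (gram ℝ f).det = ∏ i, ‖gramSchmidt ℝ f i‖ ^ 2 := by
  let T : Matrix ι ι ℝ := of fun i a =>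
    if a < i then inner ℝ (gramSchmidt ℝ f a) (f i) / ‖gramSchmidt ℝ f a‖ ^ 2
    else if a = i then 1 else 0
  have hf : f = fun i => ∑ a, T i a • gramSchmidt ℝ f a := by
    funext i
    conv_lhs => rw [gramSchmidt_def'' ℝ f i]
    simp [T, ite_smul, Finset.sum_ite, Finset.filter_gt_eq_Iio, add_comm]
  have hT : T.det = 1 := by
    rw [det_of_isLowerTriangular]
    · simp [T]
    · intro i a (hia : i < a)
      simp [T, not_lt_of_gt hia, hia.ne']
  conv_lhs => rw [hf]
  rw [gram_sum_smul, gram_gramSchmidt_eq_diagonal, det_mul, det_mul, det_transpose, hT,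
    det_diagonal, one_mul, mul_one]

theorem prod_norm_gramSchmidt_le_of_forall_mem_span_int [Fintype ι] {v w : ι → E}
    (hw : ∀ t, w t ∈ span ℤ (Set.range v)) (hw₀ : ∀ t, gramSchmidt ℝ w t ≠ 0) :
    ∏ t, ‖gramSchmidt ℝ v t‖ ≤ ∏ t, ‖gramSchmidt ℝ w t‖ := by
  have hdet := det_gram_le_of_forall_mem_span_int hw <| by
    rw [det_gram_eq_prod_norm_gramSchmidt_sq]
    exact prod_ne_zero_iff.mpr fun t _ => pow_ne_zero 2 (norm_ne_zero_iff.mpr (hw₀ t))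
  rw [det_gram_eq_prod_norm_gramSchmidt_sq, det_gram_eq_prod_norm_gramSchmidt_sq, prod_pow,
    prod_pow] at hdet
  exact (pow_le_pow_iff_left₀ (prod_nonneg fun _ _ => norm_nonneg _)
    (prod_nonneg fun _ _ => norm_nonneg _) two_ne_zero).mp hdet

end Gram

theorem LinearIndependent.exists_notMem_span_of_card_lt {K V ι : Type*} [DivisionRing K]
    [AddCommGroup V] [Module K V] [Fintype ι] {b : ι → V} (hb : LinearIndependent K b)
    {s : Finset V} (hs : s.card < Fintype.card ι) : ∃ j, b j ∉ span K (s : Set V) := by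
  by_contra! h
  have hle := Submodule.finrank_mono (span_le.mpr (Set.range_subset_iff.mpr h))
  rw [finrank_span_eq_card hb] at hle
  have := finrank_span_finset_le_card (R := K) s
  unfold Set.finrank at this
  omega

section Extension

variable {𝕜 E : Type*} [RCLike 𝕜] [NormedAddCommGroup E] [InnerProductSpace 𝕜 E] {N : ℕ}
  {b : Fin N → E}

theorem exists_gramSchmidt_update_ne_zero_and_le (hb : LinearIndependent 𝕜 b) (u : Fin N → E)
    (t : Fin N) : ∃ j, gramSchmidt 𝕜 (Function.update u t (b j)) t ≠ 0 ∧
      ‖gramSchmidt 𝕜 (Function.update u t (b j)) t‖ ≤ ‖gramSchmidt 𝕜 b j‖ := by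
  classical
  set V := span 𝕜 (u '' Set.Iio t)
  have himage (x : E) : Function.update u t x '' Set.Iio t = u '' Set.Iio t :=
    Set.image_congr fun i hi => Function.update_of_ne (ne_of_lt hi) x u
  obtain ⟨j₀, hj₀⟩ := hb.exists_notMem_span_of_card_lt (s := (Iio t).image u) <|
    calc #((Iio t).image u) ≤ #(Iio t) := card_image_le
      _ < Fintype.card (Fin N) := by simp
  rw [coe_image, coe_Iio] at hj₀
  -- With `j` least, all `b a` with `a < j` lie in `V`, hence so does `b j - gramSchmidt 𝕜 b j`.
  obtain ⟨j, hj, hmin⟩ := wellFounded_lt.has_min {j | b j ∉ V} ⟨j₀, hj₀⟩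
  refine ⟨j, gramSchmidt_ne_zero_of_notMem_span ?_, norm_gramSchmidt_le_of_span_Iio_le
    (Function.update_self t (b j) u) ?_⟩
  · rwa [himage, Function.update_self]
  · rw [himage]
    exact span_le.mpr fun _ ⟨a, ha, hab⟩ => hab ▸ not_not.mp fun h => hmin a h ha

theorem exists_extension_gramSchmidt_le (hb : LinearIndependent 𝕜 b) (c : Fin N → E)
    (k : Fin N) : ∃ u : Fin N → E, (∀ t < k, u t = c t) ∧ ∀ t, k ≤ t →
      ∃ j, u t = b j ∧ gramSchmidt 𝕜 u t ≠ 0 ∧ ‖gramSchmidt 𝕜 u t‖ ≤ ‖gramSchmidt 𝕜 b j‖ := by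
  suffices ∀ m : ℕ, ∃ u : Fin N → E, (∀ t < k, u t = c t) ∧ ∀ t, k ≤ t → t.val < k + m →
      ∃ j, u t = b j ∧ gramSchmidt 𝕜 u t ≠ 0 ∧ ‖gramSchmidt 𝕜 u t‖ ≤ ‖gramSchmidt 𝕜 b j‖ from
    (this N).imp fun u ⟨huc, hub⟩ => ⟨huc, fun t ht => hub t ht (by omega)⟩
  intro m
  induction m with
  | zero => exact ⟨c, fun _ _ => rfl, fun t ht ht' => absurd ht (not_le.mpr ht')⟩
  | succ m ih =>
    obtain ⟨u, huc, hub⟩ := ih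
    by_cases hN : k + m < N
    swap
    · exact ⟨u, huc, fun t ht _ => hub t ht (by omega)⟩
    set t₀ : Fin N := ⟨k + m, hN⟩
    obtain ⟨j, hj₀, hj⟩ := exists_gramSchmidt_update_ne_zero_and_le hb u t₀
    refine ⟨Function.update u t₀ (b j), fun t ht => ?_, fun t ht htm => ?_⟩
    · rw [Function.update_of_ne (by simp [Fin.ext_iff, t₀]; omega), huc t ht]
    rcases eq_or_ne t t₀ with rfl | htt₀
    · exact ⟨j, Function.update_self _ _ _, hj₀, hj⟩
    have htt₀ : t < t₀ := by simp [Fin.lt_def, Fin.ext_iff, t₀] at htt₀ ⊢; omega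
    rw [Function.update_of_ne htt₀.ne, gramSchmidt_congr fun i hi =>
      Function.update_of_ne (hi.trans_lt htt₀).ne (b j) u]
    exact hub t ht (by simp [Fin.lt_def, t₀] at htt₀; omega)

end Extension

theorem Finset.prod_Iio_mul_prod_Ici {α M : Type*} [CommMonoid M] [LinearOrder α] [Fintype α]
    [LocallyFiniteOrderBot α] [LocallyFiniteOrderTop α] (f : α → M) (a : α) :
    (∏ x ∈ Iio a, f x) * ∏ x ∈ Ici a, f x = ∏ x, f x := by
  rw [← prod_filter_mul_prod_filter_not univ (· < a)]
  congr 2 <;> ext <;> simp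

theorem prod_norm_gramSchmidt_Ici_le {E : Type*} [NormedAddCommGroup E] [InnerProductSpace ℝ E]
    {N : ℕ} {b c : Fin N → E} (hb : LinearIndependent ℝ b) (hc : LinearIndependent ℝ c)
    (hbc : ∀ j, b j ∈ span ℤ (Set.range c)) (k : Fin N) {M : ℝ}
    (hM : ∀ j, ‖gramSchmidt ℝ b j‖ ≤ M) :
    ∏ t ∈ Ici k, ‖gramSchmidt ℝ c t‖ ≤ M ^ #(Ici k) := by
  obtain ⟨u, huc, hub⟩ := exists_extension_gramSchmidt_le (𝕜 := ℝ) hb c k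
  have hhead : ∀ t ∈ Iio k, gramSchmidt ℝ u t = gramSchmidt ℝ c t := fun t ht =>
    gramSchmidt_congr fun i hi => huc i (hi.trans_lt (mem_Iio.mp ht))
  have hu : ∀ t, u t ∈ span ℤ (Set.range c) := by
    intro t
    rcases lt_or_ge t k with ht | ht
    · exact huc t ht ▸ subset_span ⟨t, rfl⟩
    · obtain ⟨j, hj, -⟩ := hub t ht
      exact hj ▸ hbc j
  have hu₀ : ∀ t, gramSchmidt ℝ u t ≠ 0 := by
    intro t
    rcases lt_or_ge t k with ht | ht
    · exact hhead t (mem_Iio.mpr ht) ▸ gramSchmidt_ne_zero t hc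
    · obtain ⟨j, -, hj₀, -⟩ := hub t ht
      exact hj₀
  have hprod := prod_norm_gramSchmidt_le_of_forall_mem_span_int hu hu₀
  rw [← prod_Iio_mul_prod_Ici _ k, ← prod_Iio_mul_prod_Ici _ k, prod_congr rfl
    fun t ht => congrArg norm (hhead t ht)] at hprod
  have hhead_pos : 0 < ∏ t ∈ Iio k, ‖gramSchmidt ℝ c t‖ :=
    prod_pos fun t _ => norm_pos_iff.mpr (gramSchmidt_ne_zero t hc)
  refine (le_of_mul_le_mul_left hprod hhead_pos).trans ((prod_le_prod (fun _ _ => norm_nonneg _)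
    fun t ht => ?_).trans_eq (prod_const M))
  obtain ⟨j, -, -, hj⟩ := hub t (mem_Ici.mp ht)
  exact hj.trans (hM j)

theorem Fin.le_pow_sub_mul_of_le_mul_succ {N : ℕ} {x : Fin N → ℝ} {a : ℝ} (ha : 0 ≤ a)
    (hx : ∀ i : Fin N, ∀ h : i.val + 1 < N, x i ≤ a * x ⟨i.val + 1, h⟩) {i j : Fin N}
    (hij : i ≤ j) : x i ≤ a ^ (j - i : ℕ) * x j := by
  obtain ⟨d, hd⟩ := Nat.exists_eq_add_of_le hij
  induction d generalizing j with
  | zero => simp [Fin.ext hd]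
  | succ d ih =>
    have hlt : i.val + d + 1 < N := hd ▸ j.isLt
    have hlt' : i.val + d < N := by omega
    have hj : (⟨i.val + d + 1, hlt⟩ : Fin N) = j := Fin.ext hd.symm
    calc x i ≤ a ^ d * x ⟨i + d, hlt'⟩ := by
          simpa using ih (j := ⟨i + d, hlt'⟩) (by simp [Fin.le_def]) rfl
      _ ≤ a ^ d * (a * x j) := by
          rw [← hj]; exact mul_le_mul_of_nonneg_left (hx _ hlt) (pow_nonneg ha d)
      _ = a ^ (j - i : ℕ) * x j := by rw [hd, Nat.add_sub_cancel_left, pow_succ, mul_assoc]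

theorem Fin.sum_Ici_sub_mul_two {N : ℕ} (k : Fin N) :
    (∑ t ∈ Ici k, (t - k : ℕ)) * 2 = #(Ici k) * (#(Ici k) - 1) := by
  have hmap := sum_map (Ici k) Fin.valEmbedding (fun n => n - (k : ℕ))
  rw [Fin.valEmbedding_apply] at hmap
  rw [← hmap, Fin.map_valEmbedding_Ici, sum_Ico_eq_sum_range, Fin.card_Ici]
  simp only [Nat.add_sub_cancel_left]
  exact sum_range_id_mul_two _

theorem le_rpow_mul_of_prod_Ici_le {N : ℕ} {x : Fin N → ℝ} {α M : ℝ} (hα : 1 ≤ α)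
    (hx : ∀ i, 0 ≤ x i) (hchain : ∀ i : Fin N, ∀ h : i.val + 1 < N, x i ≤ √α * x ⟨i.val + 1, h⟩)
    (k : Fin N) (hM : 0 ≤ M) (hprod : ∏ t ∈ Ici k, x t ≤ M ^ #(Ici k)) :
    x k ≤ α ^ ((N - 1 : ℝ) / 4) * M := by
  set r := #(Ici k)
  set S := ∑ t ∈ Ici k, (t - k : ℕ)
  have hr : 0 < r := card_pos.mpr nonempty_Ici
  have hpow : x k ^ r ≤ √α ^ S * M ^ r := calc
    x k ^ r = ∏ t ∈ Ici k, x k := (prod_const _).symm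
    _ ≤ ∏ t ∈ Ici k, √α ^ (t - k : ℕ) * x t := prod_le_prod (fun _ _ => hx k)
      fun t ht => Fin.le_pow_sub_mul_of_le_mul_succ (Real.sqrt_nonneg α) hchain (mem_Ici.mp ht)
    _ = √α ^ S * ∏ t ∈ Ici k, x t := by rw [prod_mul_distrib, prod_pow_eq_pow_sum]
    _ ≤ √α ^ S * M ^ r := by gcongr
  have hS : S * 2 ≤ r * (N - 1) := by
    rw [Fin.sum_Ici_sub_mul_two k]
    exact Nat.mul_le_mul_left r <|
      Nat.sub_le_sub_right ((Fin.card_Ici k).trans_le (Nat.sub_le N k)) 1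
  have hexp : √α ^ S ≤ (α ^ ((N - 1 : ℝ) / 4)) ^ r := by
    have hα₀ : 0 ≤ α := zero_le_one.trans hα
    rw [Real.sqrt_eq_rpow, ← Real.rpow_natCast, ← Real.rpow_natCast, ← Real.rpow_mul hα₀,
      ← Real.rpow_mul hα₀]
    refine Real.rpow_le_rpow_of_exponent_le hα ?_
    have hS' : ((S * 2 : ℕ) : ℝ) ≤ ((r * (N - 1) : ℕ) : ℝ) := Nat.cast_le.mpr hS
    push_cast [Nat.cast_sub k.pos] at hS'
    linarith
  refine (pow_le_pow_iff_left₀ (hx k) (by positivity) hr.ne').mp ?_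
  calc x k ^ r ≤ (α ^ ((N - 1 : ℝ) / 4)) ^ r * M ^ r := hpow.trans (by gcongr)
    _ = (α ^ ((N - 1 : ℝ) / 4) * M) ^ r := (mul_pow _ _ _).symm

theorem LLL_basis_relative_bound_general (N : ℕ) (ε : ℝ) (hε : 0 < ε)
    (b c : Fin N → EuclideanSpace ℝ (Fin N))
    (hb : LinearIndependent ℝ b) (hc : LinearIndependent ℝ c)
    (hsame : Submodule.span ℤ (Set.range b) = Submodule.span ℤ (Set.range c))
    (bs cs : Fin N → EuclideanSpace ℝ (Fin N))
    (hbs : bs = gramSchmidtFin b) (hcs : cs = gramSchmidtFin c)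
    (hLLL : ∀ i : Fin N, ∀ h : i.val + 1 < N,
      ‖cs i‖ ≤ Real.sqrt (4 / 3 + ε) * ‖cs ⟨i.val + 1, h⟩‖)
    (hNe : (Finset.univ : Finset (Fin N)).Nonempty) :
    ∀ i : Fin N, ‖cs i‖ ≤
      (4 / 3 + ε) ^ ((N - 1 : ℝ) / 4) * Finset.univ.sup' hNe fun j => ‖bs j‖ := by
  intro k
  subst hbs hcs
  have hM (j : Fin N) : ‖gramSchmidtFin b j‖ ≤ univ.sup' hNe fun j => ‖gramSchmidtFin b j‖ :=
    le_sup' (fun j => ‖gramSchmidtFin b j‖) (mem_univ j)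
  refine le_rpow_mul_of_prod_Ici_le (by linarith) (fun _ => norm_nonneg _) hLLL k
    ((norm_nonneg _).trans (hM k)) ?_
  exact prod_norm_gramSchmidt_Ici_le hb hc (fun j => hsame ▸ subset_span ⟨j, rfl⟩) k hM

/-- If `b` and `c` are two bases of the same lattice and `c` is LLL-reduced, then
`max ‖c i*‖ ≤ (4/3+ε)^((N−1)/4) · max ‖b i*‖`. -/
theorem LLL_basis_relative_bound (N : ℕ) (hN : 1 ≤ N) (ε : ℝ) (hε : 0 < ε)
    (b c : Fin N → EuclideanSpace ℝ (Fin N))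
    (hb : LinearIndependent ℝ b) (hc : LinearIndependent ℝ c)
    (hsame : Submodule.span ℤ (Set.range b) = Submodule.span ℤ (Set.range c))
    (bs cs : Fin N → EuclideanSpace ℝ (Fin N))
    (hbs : bs = gramSchmidtFin b) (hcs : cs = gramSchmidtFin c)
    (hLLL : ∀ i : Fin N, ∀ h : i.val + 1 < N,
      ‖cs i‖ ≤ Real.sqrt (4 / 3 + ε) * ‖cs ⟨i.val + 1, h⟩‖)
    (hNe : (Finset.univ : Finset (Fin N)).Nonempty) :
    ∀ i : Fin N, ‖cs i‖ ≤
      (4 / 3 + ε) ^ ((N - 1 : ℝ) / 4) * Finset.univ.sup' hNe fun j => ‖bs j‖ :=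
  LLL_basis_relative_bound_general N ε hε b c hb hc hsame bs cs hbs hcs hLLL hNe
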